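/- Fix i, j ∈ {1,…,N_k}, let δ > 0, let W(y|x) > 0 for all x, y, take the distance d(P) = −I(P) with thresholds Δ_i = −(R_i + δ) where R_i = t·H(P_i), and take the decoding metric q(i, P) = E_P[log W(Y|X)] − 2R_i. Then min_{P ∈ Γ_ij} { D(P_{XY} ‖ Q_{μ(i)} × W) + | I_P(X̄; X, Y) − R_j |⁺ } ≥ min_{Λ : Λ_X = Q_{μ(i)}, Λ_X̄ = Q_{μ(j)}, I(Λ) ≤ min(R_i, R_j) + δ} { I(Λ) + E_Λ[d_W(X, X̄)] } − R_i, where Γ_ij = { P_{XX̄Y} : P_X = Q_{μ(i)}, P_X̄ = Q_{μ(j)}, I(P_{XX̄}) ≤ min(R_i, R_j) + δ, E_{P_{XY}}[log W(Y|X)] − 2R_i ≤ E_{P_{X̄Y}}[log W(Y|X̄)] − 2R_j } (minima over empty sets = +∞). In particular, E_rgv^{(ij)}(P_V, W) ≥ t·e(R_i/t, P_V) + min_{Λ : Λ_X = Q_{μ(i)}, Λ_X̄ ∈ 𝒬_m, I(Λ) ≤ R_i + δ} { I(Λ) + E_Λ[d_W(X, X̄)] } − R_i. -/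

import Mathlib

/-!
Write `Λ = P_XX̄`. The chain rule gives
`D(P_XY ‖ P_X × W) + I(X̄; X, Y) = D(P ‖ Λ × W) + I(Λ)`. Adding half of the decoding condition
`E log W(Y|X) - 2 R_i ≤ E log W(Y|X̄) - 2 R_j` (the choice `s = 1/2`) replaces `W(y|x)` by
`√(W(y|x) W(y|x̄))` at a cost of `R_i - R_j`, and the log-sum inequality in `y` bounds
`D(P ‖ Λ × √(W W))` from below by `E_Λ[d_W(X, X̄)]`. Since `Λ` itself satisfies the constraints
of both minimizations, and the objective `I + E[d_W]` is nonnegative, both bounds follow.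
-/

open scoped BigOperators Classical

noncomputable section

namespace RGV

variable {α β γ : Type*}

/-- Empirical distribution (type) of a sequence. -/
def empDist [DecidableEq α] {n : ℕ} (x : Fin n → α) : α → ℝ :=
  fun a => ((Finset.univ.filter fun i => x i = a).card : ℝ) / n

/-- Joint empirical distribution of a pair of sequences. -/
def empDist2 [DecidableEq α] [DecidableEq β] {n : ℕ} (x : Fin n → α) (y : Fin n → β) :
    α × β → ℝ :=
  fun p => ((Finset.univ.filter fun i => x i = p.1 ∧ y i = p.2).card : ℝ) / n

/-- Joint empirical distribution of a triple of sequences. -/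
def empDist3 [DecidableEq α] [DecidableEq β] [DecidableEq γ] {n : ℕ}
    (x : Fin n → α) (x' : Fin n → β) (y : Fin n → γ) : α × β × γ → ℝ :=
  fun p => ((Finset.univ.filter fun i => x i = p.1 ∧ x' i = p.2.1 ∧ y i = p.2.2).card : ℝ) / n

/-- The type class `T^n(Q)`: all sequences in `αⁿ` with empirical distribution `Q`. -/
def typeClass [Fintype α] [DecidableEq α] (n : ℕ) (Q : α → ℝ) : Finset (Fin n → α) :=
  Finset.univ.filter fun x => empDist x = Q

/-- `p` is a probability distribution on the finite set `α`. -/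
def IsProbDist [Fintype α] (p : α → ℝ) : Prop :=
  (∀ a, 0 ≤ p a) ∧ ∑ a, p a = 1

/-- Shannon entropy (natural logarithm; `Real.log 0 = 0` gives the `0 log 0 = 0` convention). -/
def entropy [Fintype α] (p : α → ℝ) : ℝ := -∑ a, p a * Real.log (p a)

/-- Kullback–Leibler divergence (convention `0 log 0 = 0`). -/
def klDiv [Fintype α] (p q : α → ℝ) : ℝ := ∑ a, p a * Real.log (p a / q a)

def fstMarg [Fintype β] (p : α × β → ℝ) : α → ℝ := fun a => ∑ b, p (a, b)

def sndMarg [Fintype α] (p : α × β → ℝ) : β → ℝ := fun b => ∑ a, p (a, b)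

/-- Mutual information of a joint distribution on `α × β`. -/
def mutualInfo [Fintype α] [Fintype β] (p : α × β → ℝ) : ℝ :=
  ∑ q, p q * Real.log (p q / (fstMarg p q.1 * sndMarg p q.2))

/- Marginals of a joint distribution on a triple `X × X̄ × Y` (ordering `(x, x̄, y)`). -/

def margX [Fintype β] [Fintype γ] (p : α × β × γ → ℝ) : α → ℝ :=
  fun a => ∑ b, ∑ c, p (a, b, c)

def margXbar [Fintype α] [Fintype γ] (p : α × β × γ → ℝ) : β → ℝ :=
  fun b => ∑ a, ∑ c, p (a, b, c)

def margXY [Fintype β] (p : α × β × γ → ℝ) : α × γ → ℝ :=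
  fun q => ∑ b, p (q.1, b, q.2)

def margXbarY [Fintype α] (p : α × β × γ → ℝ) : β × γ → ℝ :=
  fun q => ∑ a, p (a, q.1, q.2)

def margXXbar [Fintype γ] (p : α × β × γ → ℝ) : α × β → ℝ :=
  fun q => ∑ c, p (q.1, q.2, c)

/-- Mutual information `I_P(X̄; (X,Y))` for a joint distribution `P` on `X × X̄ × Y`. -/
def miXbarXY [Fintype α] [Fintype β] [Fintype γ] (p : α × β × γ → ℝ) : ℝ :=
  mutualInfo (fun q : β × α × γ => p (q.2.1, q.1, q.2.2))

/-- Bhattacharyya distance `d_W(x, x') = -log Σ_y √(W(y|x) W(y|x'))`. -/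
def dW {𝒳 𝒴 : Type*} [Fintype 𝒴] (W : 𝒳 → 𝒴 → ℝ) (x x' : 𝒳) : ℝ :=
  -Real.log (∑ y, Real.sqrt (W x y * W x' y))

/-- Source reliability function `e(R, P_V) = min_{Q : H(Q) ≥ R} D(Q‖P_V)`. -/
def srcRel {𝒱 : Type*} [Fintype 𝒱] (R : ℝ) (PV : 𝒱 → ℝ) : ℝ :=
  sInf {z | ∃ Q : 𝒱 → ℝ, IsProbDist Q ∧ R ≤ entropy Q ∧ z = klDiv Q PV}

/-- Random-coding error exponent
`E_r(Q, R) = min_{P_{XY} : P_X = Q} D(P‖Q×W) + |I_P(X;Y) − R|⁺`. -/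
def Er {𝒳 𝒴 : Type*} [Fintype 𝒳] [Fintype 𝒴] (W : 𝒳 → 𝒴 → ℝ) (Q : 𝒳 → ℝ) (R : ℝ) : ℝ :=
  sInf {z | ∃ P : 𝒳 × 𝒴 → ℝ, IsProbDist P ∧ fstMarg P = Q ∧
    z = klDiv P (fun r => Q r.1 * W r.1 r.2) + max (mutualInfo P - R) 0}

/-- Csiszár's generalized expurgated exponent (with slack `δ` in the mutual
information constraint):
`E'_ex,δ(Q, 𝒬, R) = min_{Λ : Λ_X = Q, Λ_X̄ ∈ 𝒬, I(Λ) ≤ R+δ} E_Λ[d_W] + I(Λ) − R`. -/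
def EexPrime {𝒳 𝒴 : Type*} [Fintype 𝒳] [Fintype 𝒴] (W : 𝒳 → 𝒴 → ℝ) (Q : 𝒳 → ℝ)
    (Qset : Set (𝒳 → ℝ)) (R δ : ℝ) : ℝ :=
  sInf ((fun Λ : 𝒳 × 𝒳 → ℝ => (∑ p : 𝒳 × 𝒳, Λ p * dW W p.1 p.2) + mutualInfo Λ - R) ''
    {Λ | IsProbDist Λ ∧ fstMarg Λ = Q ∧ sndMarg Λ ∈ Qset ∧ mutualInfo Λ ≤ R + δ})

/-- The data of the random Gilbert–Varshamov joint source-channel code construction: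
an enumeration `srcType` of the types of `𝒱^k` (ordered by their index in `Fin Nk`),
a collection `Q` of codeword types with assignment `μ`, a symmetric distance `dd`
depending on a pair of sequences only through their joint type,
minimum-distance thresholds `Δ`, and an ordering `ord` of the source messages in which
the source-type index is nondecreasing. -/
structure Setup (𝒱 𝒳 : Type*) [Fintype 𝒱] [DecidableEq 𝒱] [Fintype 𝒳] [DecidableEq 𝒳]
    (k n : ℕ) where
  Nk : ℕ
  srcType : Fin Nk → 𝒱 → ℝ
  srcType_inj : Function.Injective srcType
  srcType_isType : ∀ i, ∃ v : Fin k → 𝒱, empDist v = srcType i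
  cls : (Fin k → 𝒱) → Fin Nk
  cls_spec : ∀ v, empDist v = srcType (cls v)
  m : ℕ
  Q : Fin m → 𝒳 → ℝ
  Q_isType : ∀ c, ∃ x : Fin n → 𝒳, empDist x = Q c
  μ : Fin Nk → Fin m
  dd : (𝒳 × 𝒳 → ℝ) → ℝ
  dd_symm : ∀ P : 𝒳 × 𝒳 → ℝ, dd (fun p => P (p.2, p.1)) = dd P
  Δ : Fin Nk → ℝ
  ord : (Fin k → 𝒱) ≃ Fin (Fintype.card (Fin k → 𝒱))
  ord_mono : ∀ v w : Fin k → 𝒱, ord v ≤ ord w → cls v ≤ cls w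

namespace Setup

variable {𝒱 𝒳 𝒴 : Type*} [Fintype 𝒱] [DecidableEq 𝒱] [Fintype 𝒳] [DecidableEq 𝒳]
  [Fintype 𝒴] [DecidableEq 𝒴] {k n : ℕ}

/-- The distance on sequences induced by the joint-type-dependent distance `dd`. -/
def d (S : Setup 𝒱 𝒳 k n) (x x' : Fin n → 𝒳) : ℝ := S.dd (empDist2 x x')

/-- The set from which the codeword of the message `v` is drawn uniformly, given the
codewords `f w` of the messages `w` generated before `v`: all sequences in the type class
`T^n(Q_{μ(cls v)})` at distance greater than `max (Δ (cls v)) (Δ (cls w))` from every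
previously generated codeword `f w`.  (For `w` in the same class this is the
within-class constraint `d > Δ_i`; for `w` in an earlier class `j` it is
`d > max (Δ_i, Δ_j)`.) -/
def admissible (S : Setup 𝒱 𝒳 k n) (f : (Fin k → 𝒱) → Fin n → 𝒳) (v : Fin k → 𝒱) :
    Finset (Fin n → 𝒳) :=
  (typeClass n (S.Q (S.μ (S.cls v)))).filter fun z =>
    ∀ w, S.ord w < S.ord v → max (S.Δ (S.cls v)) (S.Δ (S.cls w)) < S.d (f w) z

/-- The probability that the sequential RGV construction produces exactly the
codebook `f` : at each step the codeword is drawn uniformly from the admissible set. -/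
def prob (S : Setup 𝒱 𝒳 k n) (f : (Fin k → 𝒱) → Fin n → 𝒳) : ℝ :=
  ∏ v, if f v ∈ S.admissible f v then ((S.admissible f v).card : ℝ)⁻¹ else 0

/-- Probability of an event under the random RGV codebook. -/
def probEvent (S : Setup 𝒱 𝒳 k n) (E : ((Fin k → 𝒱) → Fin n → 𝒳) → Prop) : ℝ :=
  ∑ f, if E f then S.prob f else 0

/-- `ζ_n = N_k (n+1)^{|𝒳|² + |𝒳|}`. -/
def zeta (S : Setup 𝒱 𝒳 k n) : ℝ :=
  (S.Nk : ℝ) * (n + 1 : ℝ) ^ (Fintype.card 𝒳 ^ 2 + Fintype.card 𝒳)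

/-- The discard condition: for each codeword type class `T^n(Q_c)`, the number of
sequences violating the distance constraints is at most `ζ_n |T^n(Q_c)| e^{-nδ}`. -/
def DiscardCond (S : Setup 𝒱 𝒳 k n) (δ : ℝ) : Prop :=
  ∀ c : Fin S.m, ∀ xt : Fin S.Nk → Fin n → 𝒳,
    (∀ j, xt j ∈ typeClass n (S.Q (S.μ j))) →
    ∑ j : Fin S.Nk,
        (((typeClass n (S.Q c)).filter fun z => S.d z (xt j) ≤ S.Δ j).card : ℝ) *
          ((typeClass k (S.srcType j)).card : ℝ)
      ≤ S.zeta * ((typeClass n (S.Q c)).card : ℝ) * Real.exp (-(n : ℝ) * δ)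

/-- The constraint set `Γ_ij` of Theorem 1. -/
def Gamma (S : Setup 𝒱 𝒳 k n) (q : Fin S.Nk → (𝒳 × 𝒴 → ℝ) → ℝ) (i j : Fin S.Nk) :
    Set (𝒳 × 𝒳 × 𝒴 → ℝ) :=
  {P | IsProbDist P ∧ margX P = S.Q (S.μ i) ∧ margXbar P = S.Q (S.μ j) ∧
    max (S.Δ i) (S.Δ j) ≤ S.dd (margXXbar P) ∧ q i (margXY P) ≤ q j (margXbarY P)}

/-- `exp(-n E_rgv^{(ij)}(P_V, W))`, where
`E_rgv^{(ij)} = t e(R_i/t, P_V) + min_{P ∈ Γ_ij} { D(P_XY ‖ Q_{μ(i)} × W) +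
|I_P(X̄; X,Y) − R_j|⁺ }` and `R_i = t H(P_i)`; when `Γ_ij = ∅` the minimum is `+∞`
and the term is `0`. -/
def ErgvTerm (S : Setup 𝒱 𝒳 k n) (t : ℝ) (PV : 𝒱 → ℝ) (W : 𝒳 → 𝒴 → ℝ)
    (q : Fin S.Nk → (𝒳 × 𝒴 → ℝ) → ℝ) (i j : Fin S.Nk) : ℝ :=
  if (S.Gamma q i j).Nonempty then
    Real.exp (-(n : ℝ) * (t * srcRel (t * entropy (S.srcType i) / t) PV +
      sInf ((fun P => klDiv (margXY P) (fun r => S.Q (S.μ i) r.1 * W r.1 r.2) +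
        max (miXbarXY P - t * entropy (S.srcType j)) 0) '' S.Gamma q i j)))
  else 0

/-- The ensemble average error probability: the expectation over the random codebook of
the probability (over the source message and channel output) that the decoder `dec`
does not output the transmitted message. -/
def avgErr (S : Setup 𝒱 𝒳 k n) (PV : 𝒱 → ℝ) (W : 𝒳 → 𝒴 → ℝ)
    (dec : ((Fin k → 𝒱) → Fin n → 𝒳) → (Fin n → 𝒴) → Fin k → 𝒱) : ℝ :=
  ∑ f : (Fin k → 𝒱) → Fin n → 𝒳, S.prob f *
    ∑ v : Fin k → 𝒱, (∏ l, PV (v l)) *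
      ∑ y : Fin n → 𝒴, (∏ l, W (f v l) (y l)) * (if dec f y = v then 0 else 1)

end Setup


lemma sub_le_mul_log_div {a c : ℝ} (ha : 0 ≤ a) (hc : 0 ≤ c) (hac : 0 < a → 0 < c) :
    a - c ≤ a * Real.log (a / c) := by
  rcases ha.eq_or_lt with rfl | ha
  · simpa using hc
  have h := Real.one_sub_inv_le_log_of_pos (div_pos ha (hac ha))
  rw [inv_div] at h
  calc a - c = a * (1 - c / a) := by field_simp
    _ ≤ a * Real.log (a / c) := mul_le_mul_of_nonneg_left h ha.le

lemma mul_log_div_mul {a b r : ℝ} (ha : 0 ≤ a) (hab : 0 < a → 0 < b) (hr : 0 < r) :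
    a * Real.log (a / (b * r)) = a * Real.log (a / b) - a * Real.log r := by
  rcases ha.eq_or_lt with rfl | ha
  · simp
  have hb := hab ha
  rw [← div_div, Real.log_div (div_pos ha hb).ne' hr.ne', mul_sub]

/-- The log-sum inequality. -/
theorem sum_mul_log_div_le {ι : Type*} (s : Finset ι) (a b : ι → ℝ)
    (ha : ∀ i ∈ s, 0 ≤ a i) (hb : ∀ i ∈ s, 0 ≤ b i) (hab : ∀ i ∈ s, 0 < a i → 0 < b i) :
    (∑ i ∈ s, a i) * Real.log ((∑ i ∈ s, a i) / ∑ i ∈ s, b i) ≤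
      ∑ i ∈ s, a i * Real.log (a i / b i) := by
  rcases (Finset.sum_nonneg ha).eq_or_lt with hA | hA
  · have hzero := (Finset.sum_eq_zero_iff_of_nonneg ha).mp hA.symm
    rw [← hA, zero_mul]
    exact Finset.sum_nonneg fun i hi => by simp [hzero i hi]
  obtain ⟨i, hi, hai⟩ := Finset.exists_lt_of_sum_lt (f := fun _ => (0 : ℝ)) (by simpa using hA)
  have hB : 0 < ∑ i ∈ s, b i := (hab i hi hai).trans_le (Finset.single_le_sum hb hi)
  have hr := div_pos hA hB
  have key := Finset.sum_le_sum fun i hi =>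
    sub_le_mul_log_div (ha i hi) (mul_nonneg (hb i hi) hr.le) fun h => mul_pos (hab i hi h) hr
  simp only [Finset.sum_sub_distrib, ← Finset.sum_mul,
    Finset.sum_congr rfl fun i hi => mul_log_div_mul (ha i hi) (hab i hi) hr] at key
  rw [mul_div_cancel₀ _ hB.ne', sub_self] at key
  linarith

section InformationMeasures

variable {α β γ : Type*}

lemma le_fstMarg [Fintype β] {p : α × β → ℝ} (hp : ∀ q, 0 ≤ p q) (q : α × β) :
    p q ≤ fstMarg p q.1 :=
  Finset.single_le_sum (f := fun b => p (q.1, b)) (fun _ _ => hp _) (Finset.mem_univ q.2)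

lemma le_sndMarg [Fintype α] {p : α × β → ℝ} (hp : ∀ q, 0 ≤ p q) (q : α × β) :
    p q ≤ sndMarg p q.2 :=
  Finset.single_le_sum (f := fun a => p (a, q.2)) (fun _ _ => hp _) (Finset.mem_univ q.1)

lemma sum_fstMarg_mul_sndMarg [Fintype α] [Fintype β] {p : α × β → ℝ} (hp : IsProbDist p) :
    ∑ q : α × β, fstMarg p q.1 * sndMarg p q.2 = 1 := by
  have hfst : ∑ a, fstMarg p a = 1 := by rw [← hp.2, Fintype.sum_prod_type]; rfl
  have hsnd : ∑ b, sndMarg p b = 1 := by rw [← hp.2, Fintype.sum_prod_type_right]; rfl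
  rw [Fintype.sum_prod_type, ← Fintype.sum_mul_sum, hfst, hsnd, one_mul]

theorem mutualInfo_nonneg [Fintype α] [Fintype β] {p : α × β → ℝ} (hp : IsProbDist p) :
    0 ≤ mutualInfo p := by
  have h := sum_mul_log_div_le Finset.univ p (fun q => fstMarg p q.1 * sndMarg p q.2)
    (fun q _ => hp.1 q) (fun q _ => mul_nonneg ((hp.1 q).trans (le_fstMarg hp.1 q))
      ((hp.1 q).trans (le_sndMarg hp.1 q)))
    (fun q _ hq => mul_pos (hq.trans_le (le_fstMarg hp.1 q)) (hq.trans_le (le_sndMarg hp.1 q)))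
  rwa [hp.2, sum_fstMarg_mul_sndMarg hp, div_one, Real.log_one, mul_zero] at h

theorem dW_nonneg [Fintype γ] (W : α → γ → ℝ) (hW : ∀ x, IsProbDist (W x)) (x x' : α) :
    0 ≤ dW W x x' := by
  have hle : ∑ y, Real.sqrt (W x y * W x' y) ≤ 1 := by
    have h := Real.sum_sqrt_mul_sqrt_le Finset.univ (hW x).1 (hW x').1
    simp only [(hW x).2, (hW x').2, Real.sqrt_one, mul_one] at h
    simpa only [Real.sqrt_mul ((hW x).1 _)] using h
  exact neg_nonneg.mpr (Real.log_nonpos (Finset.sum_nonneg fun _ _ => Real.sqrt_nonneg _) hle)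

lemma sum_margXY_mul [Fintype α] [Fintype β] [Fintype γ] (P : α × β × γ → ℝ) (g : α × γ → ℝ) :
    ∑ r, margXY P r * g r = ∑ q, P q * g (q.1, q.2.2) := by
  simp only [margXY, Finset.sum_mul, Fintype.sum_prod_type]
  exact Finset.sum_congr rfl fun _ _ => Finset.sum_comm

lemma sum_margXbarY_mul [Fintype α] [Fintype β] [Fintype γ] (P : α × β × γ → ℝ) (g : β × γ → ℝ) :
    ∑ r, margXbarY P r * g r = ∑ q, P q * g (q.2.1, q.2.2) := by
  simp only [margXbarY, Finset.sum_mul, Fintype.sum_prod_type]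
  exact (Finset.sum_congr rfl fun _ _ => Finset.sum_comm).trans Finset.sum_comm

lemma sum_margXXbar_mul [Fintype α] [Fintype β] [Fintype γ] (P : α × β × γ → ℝ) (g : α × β → ℝ) :
    ∑ p, margXXbar P p * g p = ∑ q, P q * g (q.1, q.2.1) := by
  simp only [margXXbar, Finset.sum_mul, Fintype.sum_prod_type]

lemma miXbarXY_eq_sum [Fintype α] [Fintype β] [Fintype γ] (P : α × β × γ → ℝ) :
    miXbarXY P = ∑ q, P q * Real.log (P q / (margXbar P q.2.1 * margXY P (q.1, q.2.2))) := by
  simp only [miXbarXY, mutualInfo, fstMarg, sndMarg, margXbar, margXY, Fintype.sum_prod_type]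
  exact Finset.sum_comm

lemma le_margXY [Fintype β] {P : α × β × γ → ℝ} (hP : ∀ q, 0 ≤ P q) (q : α × β × γ) :
    P q ≤ margXY P (q.1, q.2.2) :=
  Finset.single_le_sum (f := fun b => P (q.1, b, q.2.2)) (fun _ _ => hP _) (Finset.mem_univ _)

lemma le_margXXbar [Fintype γ] {P : α × β × γ → ℝ} (hP : ∀ q, 0 ≤ P q) (q : α × β × γ) :
    P q ≤ margXXbar P (q.1, q.2.1) :=
  Finset.single_le_sum (f := fun c => P (q.1, q.2.1, c)) (fun _ _ => hP _) (Finset.mem_univ _)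

lemma margXXbar_nonneg [Fintype γ] {P : α × β × γ → ℝ} (hP : ∀ q, 0 ≤ P q) (p : α × β) :
    0 ≤ margXXbar P p :=
  Finset.sum_nonneg fun _ _ => hP _

-- Both sides are `E_P log (P / (P_X P_X̄ W))`.
theorem klDiv_margXY_add_miXbarXY [Fintype α] [Fintype β] [Fintype γ] {P : α × β × γ → ℝ}
    (hP : ∀ q, 0 ≤ P q) {W : α → γ → ℝ} (hW : ∀ x y, 0 < W x y) :
    klDiv (margXY P) (fun r => margX P r.1 * W r.1 r.2) + miXbarXY P =
      klDiv P (fun q => margXXbar P (q.1, q.2.1) * W q.1 q.2.2) + mutualInfo (margXXbar P) := by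
  have hD : klDiv (margXY P) (fun r => margX P r.1 * W r.1 r.2) = ∑ q, P q *
      Real.log (margXY P (q.1, q.2.2) / (margX P q.1 * W q.1 q.2.2)) :=
    sum_margXY_mul P _
  have hI : mutualInfo (margXXbar P) = ∑ q, P q *
      Real.log (margXXbar P (q.1, q.2.1) / (margX P q.1 * margXbar P q.2.1)) :=
    sum_margXXbar_mul P _
  rw [hD, hI, miXbarXY_eq_sum, klDiv, ← Finset.sum_add_distrib, ← Finset.sum_add_distrib]
  refine Finset.sum_congr rfl fun q _ => ?_
  rcases (hP q).eq_or_lt with hq | hq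
  · simp [← hq]
  have hXY := hq.trans_le (le_margXY hP q)
  have hΛ := hq.trans_le (le_margXXbar hP q)
  have hX : 0 < margX P q.1 := hΛ.trans_le (le_fstMarg (margXXbar_nonneg hP) (q.1, q.2.1))
  have hXbar : 0 < margXbar P q.2.1 :=
    hΛ.trans_le (le_sndMarg (margXXbar_nonneg hP) (q.1, q.2.1))
  have hWq := hW q.1 q.2.2
  rw [← mul_add, ← mul_add, ← Real.log_mul (by positivity) (by positivity),
    ← Real.log_mul (by positivity) (by positivity)]
  congr 2
  field_simp

theorem mul_dW_le_sum_mul_log [Fintype γ] {P : α × α × γ → ℝ} (hP : ∀ q, 0 ≤ P q)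
    {W : α → γ → ℝ} (hW : ∀ x y, 0 < W x y) (a b : α) :
    margXXbar P (a, b) * dW W a b ≤
      ∑ c, P (a, b, c) * Real.log (P (a, b, c) /
        (margXXbar P (a, b) * Real.sqrt (W a c * W b c))) := by
  have hΛ : ∀ c, 0 < P (a, b, c) → 0 < margXXbar P (a, b) := fun c h =>
    h.trans_le (le_margXXbar hP (a, b, c))
  have h := sum_mul_log_div_le Finset.univ (fun c => P (a, b, c))
    (fun c => margXXbar P (a, b) * Real.sqrt (W a c * W b c)) (fun _ _ => hP _)
    (fun _ _ => mul_nonneg (margXXbar_nonneg hP _) (Real.sqrt_nonneg _))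
    (fun c _ h => mul_pos (hΛ c h) (Real.sqrt_pos.mpr (mul_pos (hW a c) (hW b c))))
  rw [show ∑ c, P (a, b, c) = margXXbar P (a, b) from rfl, ← Finset.mul_sum] at h
  refine le_of_eq_of_le ?_ h
  rcases (margXXbar_nonneg hP (a, b)).eq_or_lt with h0 | h0
  · simp [← h0]
  rw [div_mul_cancel_left₀ h0.ne', Real.log_inv, dW]

theorem sum_margXXbar_mul_dW_le [Fintype α] [Fintype γ] {P : α × α × γ → ℝ}
    (hP : ∀ q, 0 ≤ P q) {W : α → γ → ℝ} (hW : ∀ x y, 0 < W x y) :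
    ∑ p, margXXbar P p * dW W p.1 p.2 ≤
      klDiv P (fun q => margXXbar P (q.1, q.2.1) * W q.1 q.2.2) +
        ((∑ r, margXY P r * Real.log (W r.1 r.2)) -
          ∑ r, margXbarY P r * Real.log (W r.1 r.2)) / 2 := by
  have hsqrt : klDiv P (fun q => margXXbar P (q.1, q.2.1) * W q.1 q.2.2) +
      ((∑ r, margXY P r * Real.log (W r.1 r.2)) -
        ∑ r, margXbarY P r * Real.log (W r.1 r.2)) / 2 =
      ∑ q, P q * Real.log (P q /
        (margXXbar P (q.1, q.2.1) * Real.sqrt (W q.1 q.2.2 * W q.2.1 q.2.2))) := by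
    rw [sum_margXY_mul, sum_margXbarY_mul, klDiv, ← Finset.sum_sub_distrib, Finset.sum_div,
      ← Finset.sum_add_distrib]
    refine Finset.sum_congr rfl fun q _ => ?_
    rcases (hP q).eq_or_lt with hq | hq
    · simp [← hq]
    have hΛ := hq.trans_le (le_margXXbar hP q)
    have hW₁ := hW q.1 q.2.2
    have hW₂ := hW q.2.1 q.2.2
    rw [Real.log_div hq.ne' (by positivity), Real.log_div hq.ne' (by positivity),
      Real.log_mul hΛ.ne' (by positivity), Real.log_mul hΛ.ne' (by positivity),
      Real.log_sqrt (by positivity), Real.log_mul hW₁.ne' hW₂.ne']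
    ring
  rw [hsqrt]
  calc ∑ p, margXXbar P p * dW W p.1 p.2 = ∑ a, ∑ b, margXXbar P (a, b) * dW W a b :=
        Fintype.sum_prod_type _
    _ ≤ ∑ a, ∑ b, ∑ c, P (a, b, c) * Real.log (P (a, b, c) /
          (margXXbar P (a, b) * Real.sqrt (W a c * W b c))) :=
        Finset.sum_le_sum fun a _ => Finset.sum_le_sum fun b _ => mul_dW_le_sum_mul_log hP hW a b
    _ = _ := by simp only [Fintype.sum_prod_type]

theorem mutualInfo_add_sum_dW_sub_le [Fintype α] [Fintype γ] {P : α × α × γ → ℝ}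
    (hP : ∀ q, 0 ≤ P q) {W : α → γ → ℝ} (hW : ∀ x y, 0 < W x y) {Ri Rj : ℝ}
    (hq : (∑ r, margXY P r * Real.log (W r.1 r.2)) - 2 * Ri ≤
      (∑ r, margXbarY P r * Real.log (W r.1 r.2)) - 2 * Rj) :
    mutualInfo (margXXbar P) + ∑ p, margXXbar P p * dW W p.1 p.2 - Ri ≤
      klDiv (margXY P) (fun r => margX P r.1 * W r.1 r.2) + max (miXbarXY P - Rj) 0 := by
  linarith [klDiv_margXY_add_miXbarXY hP hW, sum_margXXbar_mul_dW_le hP hW,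
    le_max_left (miXbarXY P - Rj) 0]

lemma isProbDist_margXXbar [Fintype α] [Fintype β] [Fintype γ] {P : α × β × γ → ℝ}
    (hP : IsProbDist P) : IsProbDist (margXXbar P) :=
  ⟨margXXbar_nonneg hP.1, by simpa [hP.2] using sum_margXXbar_mul P 1⟩

lemma sInf_mutualInfo_add_sum_dW_le [Fintype α] [Fintype γ] {W : α → γ → ℝ}
    (hW : ∀ x, IsProbDist (W x)) {S : Set (α × α → ℝ)} (hS : ∀ Λ ∈ S, IsProbDist Λ)
    {Λ : α × α → ℝ} (hΛ : Λ ∈ S) :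
    sInf ((fun Λ : α × α → ℝ => mutualInfo Λ + ∑ p : α × α, Λ p * dW W p.1 p.2) '' S) ≤
      mutualInfo Λ + ∑ p : α × α, Λ p * dW W p.1 p.2 := by
  refine csInf_le ⟨0, ?_⟩ (Set.mem_image_of_mem _ hΛ)
  rintro _ ⟨Λ, hΛ, rfl⟩
  exact add_nonneg (mutualInfo_nonneg (hS Λ hΛ))
    (Finset.sum_nonneg fun p _ => mul_nonneg ((hS Λ hΛ).1 p) (dW_nonneg W hW p.1 p.2))

end InformationMeasures

theorem statement_10_general {𝒱 𝒳 𝒴 : Type*} [Fintype 𝒱] [Fintype 𝒳] [Fintype 𝒴]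
    (t δ : ℝ) (PV : 𝒱 → ℝ)
    (W : 𝒳 → 𝒴 → ℝ) (hW : ∀ x, IsProbDist (W x)) (hWpos : ∀ x y, 0 < W x y)
    (Pti Ptj : 𝒱 → ℝ) (Qi Qj : 𝒳 → ℝ) (Qset : Set (𝒳 → ℝ)) (hQj : Qj ∈ Qset)
    (P : 𝒳 × 𝒳 × 𝒴 → ℝ) (hP : IsProbDist P)
    (hPX : margX P = Qi) (hPXbar : margXbar P = Qj)
    (hI : mutualInfo (margXXbar P) ≤ min (t * entropy Pti) (t * entropy Ptj) + δ)
    (hq : (∑ r : 𝒳 × 𝒴, margXY P r * Real.log (W r.1 r.2)) - 2 * (t * entropy Pti) ≤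
      (∑ r : 𝒳 × 𝒴, margXbarY P r * Real.log (W r.1 r.2)) - 2 * (t * entropy Ptj)) :
    sInf ((fun Λ : 𝒳 × 𝒳 → ℝ => mutualInfo Λ + ∑ p : 𝒳 × 𝒳, Λ p * dW W p.1 p.2) ''
          {Λ | IsProbDist Λ ∧ fstMarg Λ = Qi ∧ sndMarg Λ = Qj ∧
            mutualInfo Λ ≤ min (t * entropy Pti) (t * entropy Ptj) + δ}) -
        t * entropy Pti ≤
      klDiv (margXY P) (fun r => Qi r.1 * W r.1 r.2) +
        max (miXbarXY P - t * entropy Ptj) 0 ∧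
    t * srcRel (t * entropy Pti / t) PV +
        (sInf ((fun Λ : 𝒳 × 𝒳 → ℝ =>
            mutualInfo Λ + ∑ p : 𝒳 × 𝒳, Λ p * dW W p.1 p.2) ''
          {Λ | IsProbDist Λ ∧ fstMarg Λ = Qi ∧ sndMarg Λ ∈ Qset ∧
            mutualInfo Λ ≤ t * entropy Pti + δ}) - t * entropy Pti) ≤
      t * srcRel (t * entropy Pti / t) PV +
        (klDiv (margXY P) (fun r => Qi r.1 * W r.1 r.2) +
          max (miXbarXY P - t * entropy Ptj) 0) := by
  have hΛ := isProbDist_margXXbar hP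
  have hcore := mutualInfo_add_sum_dW_sub_le hP.1 hWpos hq
  rw [hPX] at hcore
  have hIi : mutualInfo (margXXbar P) ≤ t * entropy Pti + δ :=
    hI.trans (by gcongr; exact min_le_left _ _)
  refine ⟨?_, add_le_add_right ?_ _⟩
  all_goals
    refine (sub_le_sub_right (sInf_mutualInfo_add_sum_dW_le hW (fun _ h => h.1) ?_) _).trans hcore
  · exact ⟨hΛ, hPX, hPXbar, hI⟩
  · exact ⟨hΛ, hPX, (hPXbar ▸ hQj : margXbar P ∈ Qset), hIi⟩

/-- With distance `d(P) = −I(P)`, thresholds `Δ_i = −(R_i + δ)`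
(so the distance constraint in `Γ_ij` reads `I(P_XX̄) ≤ min(R_i, R_j) + δ`) and the
decoding metric `q(i, P) = E_P[log W(Y|X)] − 2R_i`, every `P ∈ Γ_ij` (membership spelled
out as hypotheses) satisfies
`D(P_XY ‖ Q_{μ(i)} × W) + |I_P(X̄; X,Y) − R_j|⁺
  ≥ min_{Λ : Λ_X = Q_{μ(i)}, Λ_X̄ = Q_{μ(j)}, I(Λ) ≤ min(R_i,R_j)+δ}
      {I(Λ) + E_Λ[d_W(X, X̄)]} − R_i`,
and in particular
`t e(R_i/t, P_V) + D(P_XY ‖ Q_{μ(i)} × W) + |I_P(X̄; X,Y) − R_j|⁺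
  ≥ t e(R_i/t, P_V) + min_{Λ : Λ_X = Q_{μ(i)}, Λ_X̄ ∈ 𝒬_m, I(Λ) ≤ R_i+δ}
      {I(Λ) + E_Λ[d_W(X, X̄)]} − R_i`,
which is the expurgated lower bound on `E_rgv^{(ij)}(P_V, W)`. -/
theorem statement_10 {𝒱 𝒳 𝒴 : Type*} [Fintype 𝒱] [Fintype 𝒳] [Fintype 𝒴]
    (t δ : ℝ) (hδ : 0 < δ) (PV : 𝒱 → ℝ) (hPV : IsProbDist PV)
    (W : 𝒳 → 𝒴 → ℝ) (hW : ∀ x, IsProbDist (W x)) (hWpos : ∀ x y, 0 < W x y)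
    (Pti Ptj : 𝒱 → ℝ) (Qi Qj : 𝒳 → ℝ) (Qset : Set (𝒳 → ℝ)) (hQj : Qj ∈ Qset)
    (P : 𝒳 × 𝒳 × 𝒴 → ℝ) (hP : IsProbDist P)
    (hPX : margX P = Qi) (hPXbar : margXbar P = Qj)
    (hI : mutualInfo (margXXbar P) ≤ min (t * entropy Pti) (t * entropy Ptj) + δ)
    (hq : (∑ r : 𝒳 × 𝒴, margXY P r * Real.log (W r.1 r.2)) - 2 * (t * entropy Pti) ≤
      (∑ r : 𝒳 × 𝒴, margXbarY P r * Real.log (W r.1 r.2)) - 2 * (t * entropy Ptj)) :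
    sInf ((fun Λ : 𝒳 × 𝒳 → ℝ => mutualInfo Λ + ∑ p : 𝒳 × 𝒳, Λ p * dW W p.1 p.2) ''
          {Λ | IsProbDist Λ ∧ fstMarg Λ = Qi ∧ sndMarg Λ = Qj ∧
            mutualInfo Λ ≤ min (t * entropy Pti) (t * entropy Ptj) + δ}) -
        t * entropy Pti ≤
      klDiv (margXY P) (fun r => Qi r.1 * W r.1 r.2) +
        max (miXbarXY P - t * entropy Ptj) 0 ∧
    t * srcRel (t * entropy Pti / t) PV +
        (sInf ((fun Λ : 𝒳 × 𝒳 → ℝ =>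
            mutualInfo Λ + ∑ p : 𝒳 × 𝒳, Λ p * dW W p.1 p.2) ''
          {Λ | IsProbDist Λ ∧ fstMarg Λ = Qi ∧ sndMarg Λ ∈ Qset ∧
            mutualInfo Λ ≤ t * entropy Pti + δ}) - t * entropy Pti) ≤
      t * srcRel (t * entropy Pti / t) PV +
        (klDiv (margXY P) (fun r => Qi r.1 * W r.1 r.2) +
          max (miXbarXY P - t * entropy Ptj) 0) :=
  statement_10_general t δ PV W hW hWpos Pti Ptj Qi Qj Qset hQj P hP hPX hPXbar hI hq

end RGV
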